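/- arXiv:math/9712289 — 4 statements merged into one kernel-verified Lean document; each statement's English description precedes it below -/
import Mathlib

section
/- Let λ be an infinite cardinal, α < λ, l < ω, and let ζ ∈ A^l_{α+1} be non-maximal in A^l_{α+1} with base-λ digits (α_l, ..., α_0). Let k be the least index with α_k < α. Then the immediate successor of ζ in A^l_{α+1} is obtained by replacing digit α_k with α_k + 1 and replacing all digits α_m for m < k by 0. -/
/-- `ofDigits lam d` is the ordinal `lam^(n-1)*d_0 + ... + lam^0*d_{n-1}` where the
list `d` gives the base-`lam` digits, most significant first. -/
noncomputable def ofDigits (lam : Ordinal) : List Ordinal → Ordinal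
  | [] => 0
  | a :: rest => lam ^ rest.length * a + ofDigits lam rest

/-- `Aset lam l α` : the set of ordinals below `lam^(l+1)` all of whose `l+1`
base-`lam` digits are `< α`. -/
def Aset (lam : Ordinal) (l : ℕ) (α : Ordinal) : Set Ordinal :=
  {ζ | ∃ d : List Ordinal, d.length = l + 1 ∧ (∀ x ∈ d, x < α) ∧ ζ = ofDigits lam d}

noncomputable def Dval (lam : Ordinal) (f : ℕ → Ordinal) : ℕ → Ordinal
  | 0 => 0
  | n + 1 => lam ^ n * f n + Dval lam f n

lemma Dval_congr (lam : Ordinal) (f g : ℕ → Ordinal) (n : ℕ)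
    (h : ∀ j < n, f j = g j) : Dval lam f n = Dval lam g n := by
  induction n with
  | zero => rfl
  | succ n ih =>
    show lam ^ n * f n + Dval lam f n = lam ^ n * g n + Dval lam g n
    rw [h n n.lt_succ_self, ih (fun j hj => h j (hj.trans n.lt_succ_self))]

lemma Dval_lt_pow (lam : Ordinal) (f : ℕ → Ordinal) (n : ℕ)
    (h : ∀ j < n, f j < lam) : Dval lam f n < lam ^ n := by
  induction n with
  | zero => show (0:Ordinal) < lam ^ 0; simp
  | succ n ih =>
    have h1 : Dval lam f n < lam ^ n := ih fun j hj => h j (hj.trans n.lt_succ_self)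
    have h2 : f n + 1 ≤ lam := by
      rw [Ordinal.add_one_eq_succ, Order.succ_le_iff]; exact h n n.lt_succ_self
    show lam ^ n * f n + Dval lam f n < lam ^ (n + 1)
    calc lam ^ n * f n + Dval lam f n < lam ^ n * f n + lam ^ n := add_lt_add_right h1 _
      _ = lam ^ n * (f n + 1) := (mul_add_one _ _).symm
      _ ≤ lam ^ n * lam := mul_le_mul_right h2 _
      _ = lam ^ (n + 1) := (pow_succ _ _).symm

lemma Dval_mono_le (lam : Ordinal) (f g : ℕ → Ordinal) (n : ℕ)
    (h : ∀ j < n, f j ≤ g j) : Dval lam f n ≤ Dval lam g n := by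
  induction n with
  | zero => exact le_refl _
  | succ n ih =>
    exact add_le_add (mul_le_mul_right (h n n.lt_succ_self) _)
      (ih fun j hj => h j (hj.trans n.lt_succ_self))

lemma Dval_lt (lam : Ordinal) (f g : ℕ → Ordinal) (n : ℕ)
    (hf : ∀ j < n, f j < lam) (k : ℕ) (hk : k < n) (hfg : f k < g k)
    (hab : ∀ j, k < j → j < n → f j = g j) : Dval lam f n < Dval lam g n := by
  induction n with
  | zero => omega
  | succ n ih =>
    show lam ^ n * f n + Dval lam f n < lam ^ n * g n + Dval lam g n
    rcases eq_or_lt_of_le (Nat.lt_succ_iff.mp hk) with h | h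
    · subst h
      have h1 : Dval lam f k < lam ^ k := Dval_lt_pow lam f k fun j hj => hf j (hj.trans k.lt_succ_self)
      have h2 : f k + 1 ≤ g k := by
        rw [Ordinal.add_one_eq_succ, Order.succ_le_iff]; exact hfg
      calc lam ^ k * f k + Dval lam f k < lam ^ k * f k + lam ^ k := add_lt_add_right h1 _
        _ = lam ^ k * (f k + 1) := (mul_add_one _ _).symm
        _ ≤ lam ^ k * g k := mul_le_mul_right h2 _
        _ ≤ lam ^ k * g k + Dval lam g k := le_add_of_nonneg_right zero_le
    · rw [hab n h n.lt_succ_self]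
      exact add_lt_add_right (ih (fun j hj => hf j (hj.trans n.lt_succ_self)) h
        (fun j hj1 hj2 => hab j hj1 (hj2.trans n.lt_succ_self))) _

lemma Dval_lt_decomp (lam : Ordinal) (f g : ℕ → Ordinal) (n : ℕ)
    (hg : ∀ j < n, g j < lam)
    (h : Dval lam f n < Dval lam g n) :
    ∃ k < n, f k < g k ∧ ∀ j, k < j → j < n → f j = g j := by
  induction n with
  | zero => exact absurd h (lt_irrefl _)
  | succ n ih =>
    rcases lt_trichotomy (f n) (g n) with h1 | h1 | h1
    · exact ⟨n, n.lt_succ_self, h1, fun j hj1 hj2 => by omega⟩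
    · have htail : Dval lam f n < Dval lam g n := by
        have h' : lam ^ n * f n + Dval lam f n < lam ^ n * g n + Dval lam g n := h
        rw [h1] at h'
        exact lt_of_add_lt_add_left h'
      obtain ⟨k, hkn, hlt, hab⟩ := ih (fun j hj => hg j (hj.trans n.lt_succ_self)) htail
      refine ⟨k, hkn.trans n.lt_succ_self, hlt, fun j hj1 hj2 => ?_⟩
      rcases Nat.lt_succ_iff_lt_or_eq.mp hj2 with h2 | h2
      · exact hab j hj1 h2
      · subst h2; exact h1
    · exact absurd (h.trans (Dval_lt lam g f (n+1) hg n n.lt_succ_self h1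
        (fun j hj1 hj2 => by omega))) (lt_irrefl _)

lemma ofDigits_reverse (lam : Ordinal) (e : List Ordinal) :
    ofDigits lam e.reverse = Dval lam (fun j => e.getD j 0) e.length := by
  induction e using List.reverseRecOn with
  | nil => rfl
  | append_singleton t a ih =>
    rw [List.reverse_append, List.reverse_singleton, List.singleton_append]
    show lam ^ t.reverse.length * a + ofDigits lam t.reverse = _
    rw [List.length_reverse, ih, List.length_append, List.length_singleton]
    show _ = lam ^ t.length * ((t ++ [a]).getD t.length 0) + Dval lam _ t.length
    rw [List.getD_append_right t [a] _ _ le_rfl]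
    simp only [Nat.sub_self, List.getD_cons_zero]
    congr 1
    exact Dval_congr lam _ _ t.length fun j hj =>
      (List.getD_append t [a] 0 j hj).symm

/-- If ζ ∈ A^l_{α+1} has digits d (d j = coefficient of λ^j), is not maximal in A^l_{α+1},
and k is the least index with d k < α, then the immediate successor of ζ in A^l_{α+1}
is obtained by replacing digit k by d k + 1 and all digits below k by 0. -/
theorem immediate_successor_in_Aset (lam : Cardinal) (hlam : Cardinal.aleph0 ≤ lam)
    (l : ℕ) (α : Ordinal) (hα : α < lam.ord)
    (d : Fin (l + 1) → Ordinal) (hd : ∀ j, d j < α + 1)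
    (ζ : Ordinal) (hζ : ζ = ofDigits lam.ord (List.ofFn d).reverse)
    (hnonmax : ∃ ζ' ∈ Aset lam.ord l (α + 1), ζ < ζ')
    (k : Fin (l + 1)) (hk : d k < α) (hkmin : ∀ j < k, d j = α) :
    IsLeast {x ∈ Aset lam.ord l (α + 1) | ζ < x}
      (ofDigits lam.ord (List.ofFn (fun j : Fin (l + 1) =>
        if j < k then 0 else if j = k then d k + 1 else d j)).reverse) := by

  set D' : Fin (l + 1) → Ordinal :=
    fun j => if j < k then 0 else if j = k then d k + 1 else d j with hD'def
  -- bridge lemmas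
  have hbridge : ∀ f : Fin (l + 1) → Ordinal,
      ofDigits lam.ord (List.ofFn f).reverse
        = Dval lam.ord (fun j => (List.ofFn f).getD j 0) (l + 1) := by
    intro f
    rw [ofDigits_reverse, List.length_ofFn]
  have hget : ∀ (f : Fin (l + 1) → Ordinal) (j : ℕ) (hj : j < l + 1),
      (List.ofFn f).getD j 0 = f ⟨j, hj⟩ := by
    intro f j hj
    rw [List.getD_eq_getElem _ _ (by simpa using hj), List.getElem_ofFn]
  have hsle : α + 1 ≤ lam.ord := by
    rw [Ordinal.add_one_eq_succ]; exact Order.succ_le_of_lt hα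
  have hD'bound : ∀ j : Fin (l + 1), D' j < α + 1 := by
    intro j
    rw [hD'def]
    by_cases h1 : j < k
    · simpa [h1] using lt_of_le_of_lt (Ordinal.zero_le α)
        (by rw [Ordinal.add_one_eq_succ]; exact Order.lt_succ α)
    · by_cases h2 : j = k
      · subst h2
        beta_reduce
        rw [if_neg h1, if_pos rfl, Ordinal.add_one_eq_succ, Ordinal.add_one_eq_succ]
        exact Order.succ_lt_succ hk
      · simpa [h1, h2] using hd j
  set F : ℕ → Ordinal := fun j => (List.ofFn d).getD j 0 with hFdef
  set G : ℕ → Ordinal := fun j => (List.ofFn D').getD j 0 with hGdef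
  have hζ' : ζ = Dval lam.ord F (l + 1) := by rw [hζ, hbridge d]
  have hFval : ∀ (j : ℕ) (hj : j < l + 1), F j = d ⟨j, hj⟩ := fun j hj => hget d j hj
  have hGval : ∀ (j : ℕ) (hj : j < l + 1), G j = D' ⟨j, hj⟩ := fun j hj => hget D' j hj
  have hFb : ∀ j < l + 1, F j < lam.ord := fun j hj => by
    rw [hFval j hj]; exact (hd _).trans_le hsle
  have hGb : ∀ j < l + 1, G j < lam.ord := fun j hj => by
    rw [hGval j hj]; exact (hD'bound _).trans_le hsle
  have hGk : G ↑k = d k + 1 := by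
    rw [hGval ↑k k.isLt]
    simp [hD'def, Fin.eta]
  have hGF : ∀ (j : ℕ) (hj : j < l + 1), (k : ℕ) < j → G j = F j := by
    intro j hj hjk
    rw [hGval j hj, hFval j hj, hD'def]
    have h1 : ¬ (⟨j, hj⟩ : Fin (l + 1)) < k := by
      simp [Fin.lt_def]; omega
    have h2 : ¬ (⟨j, hj⟩ : Fin (l + 1)) = k := by
      simp [Fin.ext_iff]; omega
    simp [h1, h2]
  have hζsucc : ζ < ofDigits lam.ord (List.ofFn D').reverse := by
    rw [hζ', hbridge D']
    refine Dval_lt lam.ord F G (l + 1) hFb ↑k k.isLt ?_ ?_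
    · rw [hFval ↑k k.isLt, hGk]
      simp only [Fin.eta]
      rw [Ordinal.add_one_eq_succ]; exact Order.lt_succ _
    · intro j hj1 hj2; exact (hGF j hj2 hj1).symm
  constructor
  · refine ⟨⟨(List.ofFn D').reverse, by simp, ?_, rfl⟩, hζsucc⟩
    intro x hx
    rw [List.mem_reverse, List.mem_ofFn] at hx
    obtain ⟨j, rfl⟩ := hx
    exact hD'bound j
  · rintro x ⟨⟨e, he1, he2, he3⟩, hζx⟩
    have hx' : x = Dval lam.ord (fun j => e.reverse.getD j 0) (l + 1) := by
      have h := ofDigits_reverse lam.ord e.reverse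
      rw [List.reverse_reverse, List.length_reverse, he1] at h
      rw [he3, h]
    set E : ℕ → Ordinal := fun j => e.reverse.getD j 0 with hEdef
    have hE : ∀ j < l + 1, E j < α + 1 := by
      intro j hj
      have hj' : j < e.reverse.length := by simp [he1]; omega
      rw [hEdef]
      simp only
      rw [List.getD_eq_getElem _ _ hj']
      exact he2 _ (List.mem_reverse.mp (List.getElem_mem hj'))
    have hEb : ∀ j < l + 1, E j < lam.ord := fun j hj => (hE j hj).trans_le hsle
    rw [hζ', hx'] at hζx
    obtain ⟨k', hk'n, hlt, hab⟩ := Dval_lt_decomp lam.ord F E (l + 1) hEb hζx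
    rw [hbridge D', hx']
    rcases lt_trichotomy k' ↑k with hc | hc | hc
    · -- impossible: digit below k is α, can't be exceeded
      have hk'l : k' < l + 1 := hk'n
      have h1 : F k' = α := by
        rw [hFval k' hk'l]
        exact hkmin ⟨k', hk'l⟩ (by simpa [Fin.lt_def] using hc)
      have h2 : E k' ≤ α := by
        have := hE k' hk'l
        rw [Ordinal.add_one_eq_succ] at this
        exact Order.lt_succ_iff.mp this
      rw [h1] at hlt
      exact absurd hlt (not_lt.mpr h2)
    · subst hc
      have hdk : d k < E ↑k := by rw [hFval ↑k k.isLt, Fin.eta] at hlt; exact hlt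
      have h1 : d k + 1 ≤ E ↑k := by
        rw [Ordinal.add_one_eq_succ, Order.succ_le_iff]; exact hdk
      rcases eq_or_lt_of_le h1 with h2 | h2
      · refine Dval_mono_le lam.ord G E (l + 1) ?_
        intro j hj
        rcases lt_trichotomy j ↑k with h3 | h3 | h3
        · have : G j = 0 := by
            rw [hGval j hj, hD'def]
            simp only
            rw [if_pos (by simpa [Fin.lt_def] using h3)]
          rw [this]; exact zero_le
        · rw [h3, hGk, h2]
        · rw [hGF j hj h3, hab j h3 hj]
      · refine le_of_lt (Dval_lt lam.ord G E (l + 1) hGb ↑k k.isLt ?_ ?_)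
        · rw [hGk]; exact h2
        · intro j hj1 hj2; rw [hGF j hj2 hj1]; exact hab j hj1 hj2
    · refine le_of_lt (Dval_lt lam.ord G E (l + 1) hGb k' hk'n ?_ ?_)
      · rw [hGF k' hk'n hc]; exact hlt
      · intro j hj1 hj2; rw [hGF j hj2 (hc.trans hj1)]; exact hab j hj1 hj2
end

section
/- Let λ be an infinite cardinal, l < ω, n > l, α_0 < ... < α_l < λ, and let ζ_k (k ≤ l) be as in the standard 'nested digits' construction: ζ_k has digits α_0,...,α_{k-1} followed by α_k repeated (l+1-k) times (padded with leading zeros to n+1 digits). Let ξ_k be the immediate successor of ζ_k in A^n_{α_k+1}. Then ζ_0 < ζ_1 < ... < ζ_l < ξ_l < ξ_{l-1} < ... < ξ_0. -/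
/-- `zetaSeq lam l α k` is the ordinal whose base-`lam` digits, most significant first,
are `α 0, α 1, ..., α (k-1)` followed by `α k` repeated `l+1-k` times. -/
noncomputable def zetaSeq (lam : Ordinal) (l : ℕ) (α : Fin (l + 1) → Ordinal)
    (k : Fin (l + 1)) : Ordinal :=
  ofDigits lam
    ((List.ofFn fun j : Fin k.val => α (j.castLE k.isLt.le)) ++
      List.replicate (l + 1 - k.val) (α k))

namespace ZXIAux

lemma ofDigits_nil (lam : Ordinal) : ofDigits lam [] = 0 := rfl

lemma npow_pos {lam : Ordinal} (h : 0 < lam) (s : ℕ) : 0 < lam ^ s := by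
  induction s with
  | zero => rw [pow_zero]; exact zero_lt_one
  | succ s ih => rw [pow_succ]; exact mul_pos ih h

lemma ofDigits_cons (lam a : Ordinal) (d : List Ordinal) :
    ofDigits lam (a :: d) = lam ^ d.length * a + ofDigits lam d := rfl

lemma ofDigits_append (lam : Ordinal) (d e : List Ordinal) :
    ofDigits lam (d ++ e) = lam ^ e.length * ofDigits lam d + ofDigits lam e := by
  induction d with
  | nil => simp [ofDigits]
  | cons a d ih =>
    rw [List.cons_append, ofDigits_cons, ofDigits_cons, List.length_append, ih, mul_add,
      ← mul_assoc, ← pow_add, Nat.add_comm e.length d.length, add_assoc]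

lemma ofDigits_lt_pow {lam : Ordinal} (h0 : 0 < lam) {d : List Ordinal}
    (hd : ∀ x ∈ d, x < lam) : ofDigits lam d < lam ^ d.length := by
  induction d with
  | nil => simpa [ofDigits] using zero_lt_one
  | cons a d ih =>
    have ha : a + 1 ≤ lam := Order.add_one_le_iff.mpr (hd a (by simp))
    have h1 : ofDigits lam d < lam ^ d.length := ih (fun x hx => hd x (by simp [hx]))
    calc ofDigits lam (a :: d) = lam ^ d.length * a + ofDigits lam d := rfl
      _ < lam ^ d.length * a + lam ^ d.length := add_lt_add_right h1 _
      _ = lam ^ d.length * (a + 1) := by rw [mul_add, mul_one]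
      _ ≤ lam ^ d.length * lam := mul_le_mul_right ha _
      _ = lam ^ (a :: d).length := by rw [List.length_cons, pow_succ]

lemma ofDigits_le_ofDigits {lam : Ordinal} {d e : List Ordinal}
    (h : List.Forall₂ (· ≤ ·) d e) : ofDigits lam d ≤ ofDigits lam e := by
  induction h with
  | nil => exact le_refl _
  | @cons a b d e hab h ih =>
    have hlen : d.length = e.length := h.length_eq
    rw [ofDigits_cons, ofDigits_cons, hlen]
    exact add_le_add (mul_le_mul_right hab _) ih

lemma ofDigits_le_replicate {lam a : Ordinal} {d : List Ordinal}
    (h : ∀ x ∈ d, x ≤ a) : ofDigits lam d ≤ ofDigits lam (List.replicate d.length a) := by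
  apply ofDigits_le_ofDigits
  induction d with
  | nil => simp
  | cons b d ih =>
    rw [List.length_cons, List.replicate_succ]
    exact List.Forall₂.cons (h b (by simp)) (ih fun x hx => h x (by simp [hx]))

lemma ofDigits_eq_zero {lam : Ordinal} {d : List Ordinal}
    (h : ∀ x ∈ d, x = 0) : ofDigits lam d = 0 := by
  induction d with
  | nil => rfl
  | cons a d ih =>
    rw [ofDigits_cons, h a (by simp), mul_zero, zero_add]
    exact ih fun x hx => h x (by simp [hx])

lemma ofDigits_replicate_zero (lam : Ordinal) (r : ℕ) :
    ofDigits lam (List.replicate r 0) = 0 :=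
  ofDigits_eq_zero (by simp)

/-- key strict inequality: `replicate (s+1) a < replicate (s+1) b` when `a < b`. -/
lemma replicate_lt_replicate {lam a b : Ordinal} (halam : a < lam) (hab : a < b) (s : ℕ) :
    ofDigits lam (List.replicate (s + 1) a) < ofDigits lam (List.replicate (s + 1) b) := by
  have h0 : (0 : Ordinal) < lam := lt_of_le_of_lt (zero_le) halam
  have h1 : ofDigits lam (List.replicate s a) < lam ^ s := by
    have := ofDigits_lt_pow h0 (d := List.replicate s a)
      (by intro x hx; rw [List.eq_of_mem_replicate hx]; exact halam)
    rwa [List.length_replicate] at this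
  calc ofDigits lam (List.replicate (s + 1) a)
      = lam ^ s * a + ofDigits lam (List.replicate s a) := by
        rw [List.replicate_succ, ofDigits_cons, List.length_replicate]
    _ < lam ^ s * a + lam ^ s := add_lt_add_right h1 _
    _ = lam ^ s * (a + 1) := by rw [mul_add, mul_one]
    _ ≤ lam ^ s * b := mul_le_mul_right (Order.add_one_le_iff.mpr hab) _
    _ ≤ lam ^ s * b + ofDigits lam (List.replicate s b) := le_self_add
    _ = ofDigits lam (List.replicate (s + 1) b) := by
        rw [List.replicate_succ, ofDigits_cons, List.length_replicate]

section Main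

variable {lam : Ordinal} (hlim : Order.IsSuccLimit lam) (l n : ℕ) (hln : l < n)
  (α' : ℕ → Ordinal)

/-- prefix value -/
noncomputable def qd (lam : Ordinal) (α' : ℕ → Ordinal) (t : ℕ) : Ordinal :=
  ofDigits lam ((List.range t).map α')

/-- the candidate successor -/
noncomputable def wd (lam : Ordinal) (l : ℕ) (α' : ℕ → Ordinal) (t : ℕ) : Ordinal :=
  lam ^ (l + 1 - t) * (qd lam α' t + 1)

/-- the zeta value, nat-indexed -/
noncomputable def zd (lam : Ordinal) (l : ℕ) (α' : ℕ → Ordinal) (t : ℕ) : Ordinal :=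
  ofDigits lam ((List.range t).map α' ++ List.replicate (l + 1 - t) (α' t))

lemma zd_eq (t : ℕ) : zd lam l α' t =
    lam ^ (l + 1 - t) * qd lam α' t + ofDigits lam (List.replicate (l + 1 - t) (α' t)) := by
  rw [zd, ofDigits_append, List.length_replicate, qd]

lemma qd_succ (t : ℕ) : qd lam α' (t + 1) = lam * qd lam α' t + α' t := by
  rw [qd, List.range_succ, List.map_append, ofDigits_append]
  simp [ofDigits, qd]

variable (hbd : ∀ i, α' i < lam)

include hbd

lemma zd_lt_wd (t : ℕ) : zd lam l α' t < wd lam l α' t := by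
  have h0 : (0 : Ordinal) < lam := lt_of_le_of_lt (zero_le) (hbd 0)
  have hT : ofDigits lam (List.replicate (l + 1 - t) (α' t)) < lam ^ (l + 1 - t) := by
    have := ofDigits_lt_pow h0 (d := List.replicate (l + 1 - t) (α' t))
      (by intro x hx; rw [List.eq_of_mem_replicate hx]; exact hbd t)
    rwa [List.length_replicate] at this
  rw [zd_eq, wd, mul_add, mul_one]
  exact add_lt_add_right hT _

variable (hmono : ∀ i j : ℕ, i < j → j ≤ l → α' i < α' j)

include hmono

lemma zd_succ_lt {t : ℕ} (ht : t < l) : zd lam l α' t < zd lam l α' (t + 1) := by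
  have hst : α' t < α' (t + 1) := hmono t (t + 1) (Nat.lt_succ_self t) ht
  have hsub : l + 1 - t = (l - t) + 1 := by omega
  have hsub2 : l + 1 - (t + 1) = l - t := by omega
  have hlt : ofDigits lam (List.replicate ((l - t - 1) + 1) (α' t)) <
      ofDigits lam (List.replicate ((l - t - 1) + 1) (α' (t + 1))) :=
    replicate_lt_replicate (hbd t) hst _
  have hltr : l - t - 1 + 1 = l - t := by omega
  rw [hltr] at hlt
  -- rewrite zd t with prefix of length t+1
  have hz : zd lam l α' t =
      lam ^ (l - t) * qd lam α' (t + 1) + ofDigits lam (List.replicate (l - t) (α' t)) := by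
    rw [zd_eq, hsub, List.replicate_succ, ofDigits_cons, List.length_replicate, qd_succ,
      pow_succ, mul_add, mul_assoc, ← add_assoc]
  have hz' : zd lam l α' (t + 1) =
      lam ^ (l - t) * qd lam α' (t + 1) +
        ofDigits lam (List.replicate (l - t) (α' (t + 1))) := by
    rw [zd_eq, hsub2]
  rw [hz, hz']
  exact add_lt_add_right hlt _

include hlim

lemma wd_succ_lt {t : ℕ} (ht : t < l) : wd lam l α' (t + 1) < wd lam l α' t := by
  have h0 : (0 : Ordinal) < lam := hlim.bot_lt
  have hsub : l + 1 - t = (l + 1 - (t + 1)) + 1 := by omega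
  have hsucc : α' t + 1 < lam := by
    rw [Ordinal.add_one_eq_succ]; exact hlim.succ_lt (hbd t)
  have key : qd lam α' (t + 1) + 1 < lam * (qd lam α' t + 1) := by
    rw [qd_succ, mul_add, mul_one, add_assoc]
    exact add_lt_add_right hsucc _
  calc wd lam l α' (t + 1) = lam ^ (l + 1 - (t + 1)) * (qd lam α' (t + 1) + 1) := rfl
    _ < lam ^ (l + 1 - (t + 1)) * (lam * (qd lam α' t + 1)) :=
        mul_lt_mul_of_pos_left key (npow_pos h0 _)
    _ = wd lam l α' t := by rw [wd, hsub, pow_succ, mul_assoc]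

include hln

/-- the candidate is least -/
lemma wd_isLeast (h00 : 0 < α' 0) {t : ℕ} (ht : t ≤ l) :
    IsLeast {x ∈ Aset lam n (α' t + 1) | zd lam l α' t < x} (wd lam l α' t) := by
  have h0 : (0 : Ordinal) < lam := hlim.bot_lt
  have hαlt : ∀ i < t, α' i < α' t := fun i hi => hmono i t hi ht
  have hself : α' t < α' t + 1 := by
    rw [Ordinal.add_one_eq_succ]; exact Order.lt_succ _
  constructor
  · constructor
    · -- membership in Aset
      rcases Nat.eq_zero_or_eq_succ_pred t with h | h
      · subst h
        refine ⟨List.replicate (n - l - 1) 0 ++ [1] ++ List.replicate (l + 1) 0, ?_, ?_, ?_⟩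
        · simp; omega
        · intro x hx
          simp only [List.mem_append, List.mem_replicate, List.mem_singleton] at hx
          rcases hx with (hx | hx) | hx
          · rw [hx.2]; exact lt_of_le_of_lt (zero_le) hself
          · rw [hx]
            exact lt_of_le_of_lt (Order.one_le_iff_pos.mpr h00) hself
          · rw [hx.2]; exact lt_of_le_of_lt (zero_le) hself
        · rw [ofDigits_append, ofDigits_append, ofDigits_replicate_zero,
            ofDigits_replicate_zero, mul_zero, zero_add, add_zero, List.length_replicate]
          show wd lam l α' 0 = _
          rw [wd, qd]
          simp [ofDigits]
      · obtain ⟨s, rfl⟩ : ∃ s, t = s + 1 := ⟨t - 1, h⟩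
        refine ⟨List.replicate (n - l) 0 ++ ((List.range s).map α' ++ [α' s + 1]) ++
          List.replicate (l + 1 - (s + 1)) 0, ?_, ?_, ?_⟩
        · simp; omega
        · intro x hx
          simp only [List.mem_append, List.mem_replicate, List.mem_singleton,
            List.mem_map, List.mem_range] at hx
          rcases hx with (hx | (⟨i, hi, rfl⟩ | hx)) | hx
          · rw [hx.2]; exact lt_of_le_of_lt (zero_le) hself
          · exact lt_trans (hαlt i (by omega)) hself
          · rw [hx]
            have : α' s < α' (s + 1) := hαlt s (Nat.lt_succ_self s)
            exact lt_of_le_of_lt (Order.add_one_le_iff.mpr this) hself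
          · rw [hx.2]; exact lt_of_le_of_lt (zero_le) hself
        · rw [ofDigits_append, ofDigits_append, ofDigits_replicate_zero,
            ofDigits_replicate_zero, mul_zero, zero_add, add_zero, List.length_replicate,
            ofDigits_append]
          show wd lam l α' (s + 1) = _
          rw [wd, qd_succ]
          simp only [ofDigits, List.length_nil, pow_zero, one_mul, add_zero,
            List.length_singleton, pow_one, List.length_map, List.length_range]
          rw [← qd, add_assoc]
    · exact zd_lt_wd l α' hbd t
  · -- lower bound
    rintro x ⟨⟨d, hdl, hdb, rfl⟩, hzx⟩
    have hdig : ∀ y ∈ d, y ≤ α' t := by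
      intro y hy
      exact Order.lt_add_one_iff.mp (hdb y hy)
    have hdiglam : ∀ y ∈ d, y < lam := fun y hy =>
      lt_of_le_of_lt (hdig y hy) (hbd t)
    have hmn : l + 1 - t ≤ n + 1 := by omega
    have hsplit : d = d.take (n + 1 - (l + 1 - t)) ++ d.drop (n + 1 - (l + 1 - t)) :=
      (List.take_append_drop _ _).symm
    have hdroplen : (d.drop (n + 1 - (l + 1 - t))).length = l + 1 - t := by
      rw [List.length_drop, hdl]; omega
    have hrT : ofDigits lam (d.drop (n + 1 - (l + 1 - t))) ≤
        ofDigits lam (List.replicate (l + 1 - t) (α' t)) := by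
      have := ofDigits_le_replicate (lam := lam) (a := α' t)
        (d := d.drop (n + 1 - (l + 1 - t))) (fun y hy => hdig y (List.mem_of_mem_drop hy))
      rwa [hdroplen] at this
    have hx : ofDigits lam d = lam ^ (l + 1 - t) * ofDigits lam (d.take (n + 1 - (l + 1 - t)))
        + ofDigits lam (d.drop (n + 1 - (l + 1 - t))) := by
      conv_lhs => rw [hsplit]
      rw [ofDigits_append, hdroplen]
    rcases le_or_gt (ofDigits lam (d.take (n + 1 - (l + 1 - t)))) (qd lam α' t) with hle | hlt
    · -- h ≤ q : contradiction with zd < x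
      exfalso
      have hxle : ofDigits lam d ≤ zd lam l α' t := by
        rw [hx, zd_eq]
        exact add_le_add (mul_le_mul_right hle _) hrT
      exact absurd hzx (not_lt.mpr hxle)
    · -- q < h
      have hqh : qd lam α' t + 1 ≤ ofDigits lam (d.take (n + 1 - (l + 1 - t))) :=
        Order.add_one_le_iff.mpr hlt
      rw [hx]
      calc wd lam l α' t = lam ^ (l + 1 - t) * (qd lam α' t + 1) := rfl
        _ ≤ lam ^ (l + 1 - t) * ofDigits lam (d.take (n + 1 - (l + 1 - t))) :=
            mul_le_mul_right hqh _
        _ ≤ _ := le_self_add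

end Main

end ZXIAux

/-- If ξ_k is the immediate successor of ζ_k in A^n_{α_k+1}, then
ζ_0 < ζ_1 < ... < ζ_l < ξ_l < ξ_{l-1} < ... < ξ_0. -/
theorem zeta_xi_interleaving (lam : Cardinal) (hlam : Cardinal.aleph0 ≤ lam)
    (l n : ℕ) (hln : l < n) (α : Fin (l + 1) → Ordinal)
    (hmono : StrictMono α) (hbd : ∀ k, α k < lam.ord)
    (ξ : Fin (l + 1) → Ordinal)
    (hξ : ∀ k, IsLeast {x ∈ Aset lam.ord n (α k + 1) | zetaSeq lam.ord l α k < x} (ξ k)) :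
    (∀ j k : Fin (l + 1), j < k → zetaSeq lam.ord l α j < zetaSeq lam.ord l α k) ∧
    (∀ j k : Fin (l + 1), j < k → ξ k < ξ j) ∧
    (∀ j k : Fin (l + 1), zetaSeq lam.ord l α j < ξ k) := by
  classical
  open ZXIAux in
  have hlim : Order.IsSuccLimit lam.ord := Cardinal.isSuccLimit_ord hlam
  -- case α 0 = 0 : contradiction
  rcases eq_or_ne (α 0) 0 with hα0 | hα0
  · exfalso
    obtain ⟨⟨⟨d, hdl, hdb, hdx⟩, hlt⟩, -⟩ := hξ 0
    have hz : ξ 0 = 0 := by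
      rw [hdx]
      apply ZXIAux.ofDigits_eq_zero
      intro x hx
      have := hdb x hx
      rw [hα0, zero_add] at this
      exact Ordinal.lt_one_iff_zero.mp this
    rw [hz] at hlt
    exact not_lt_zero hlt
  · set L := lam.ord with hL
    set α' : ℕ → Ordinal := fun i => if h : i < l + 1 then α ⟨i, h⟩ else 0 with hα'
    have hα'eq : ∀ (i : ℕ) (h : i < l + 1), α' i = α ⟨i, h⟩ := fun i h => dif_pos h
    have hbd' : ∀ i, α' i < L := by
      intro i
      by_cases h : i < l + 1
      · rw [hα'eq i h]; exact hbd _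
      · have : α' i = 0 := by simp only [hα']; rw [dif_neg h]
        rw [this]; exact hlim.bot_lt
    have hmono' : ∀ i j : ℕ, i < j → j ≤ l → α' i < α' j := by
      intro i j hij hjl
      rw [hα'eq i (by omega), hα'eq j (by omega)]
      exact hmono (by exact hij)
    have h00 : 0 < α' 0 := by
      rw [hα'eq 0 (by omega)]
      exact pos_iff_ne_zero.mpr hα0
    -- zetaSeq = zd
    have hzeq : ∀ k : Fin (l + 1), zetaSeq L l α k = ZXIAux.zd L l α' k.val := by
      intro k
      rw [zetaSeq, ZXIAux.zd]
      congr 1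
      congr 1
      · apply List.ext_getElem
        · simp
        · intro i h1 h2
          simp only [List.getElem_ofFn, List.getElem_map, List.getElem_range]
          rw [hα'eq i (by simp at h1; omega)]
          rfl
      · congr 1
        rw [hα'eq k.val k.isLt]
    have hαval : ∀ k : Fin (l + 1), α k = α' k.val := by
      intro k
      rw [hα'eq k.val k.isLt]
    -- identify ξ with wd
    have hξw : ∀ k : Fin (l + 1), ξ k = ZXIAux.wd L l α' k.val := by
      intro k
      have h1 := hξ k
      rw [hαval k] at h1
      simp only [hzeq k] at h1
      exact h1.unique (ZXIAux.wd_isLeast hlim l n hln α' hbd' hmono' h00 (by omega))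
    -- zeta strict mono at nat level
    have hzmono : ∀ b ≤ l, ∀ a < b, ZXIAux.zd L l α' a < ZXIAux.zd L l α' b := by
      intro b
      induction b with
      | zero => intro _ a ha; omega
      | succ b ih =>
        intro hb a ha
        have hzb : ZXIAux.zd L l α' b < ZXIAux.zd L l α' (b + 1) :=
          ZXIAux.zd_succ_lt l α' hbd' hmono' (by omega)
        rcases Nat.lt_succ_iff_lt_or_eq.mp ha with h | h
        · exact lt_trans (ih (by omega) a h) hzb
        · subst h; exact hzb
    have hwanti : ∀ b ≤ l, ∀ a < b, ZXIAux.wd L l α' b < ZXIAux.wd L l α' a := by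
      intro b
      induction b with
      | zero => intro _ a ha; omega
      | succ b ih =>
        intro hb a ha
        have hwb : ZXIAux.wd L l α' (b + 1) < ZXIAux.wd L l α' b :=
          ZXIAux.wd_succ_lt hlim l α' hbd' hmono' (by omega)
        rcases Nat.lt_succ_iff_lt_or_eq.mp ha with h | h
        · exact lt_trans hwb (ih (by omega) a h)
        · subst h; exact hwb
    refine ⟨?_, ?_, ?_⟩
    · intro j k hjk
      rw [hzeq j, hzeq k]
      exact hzmono k.val (by omega) j.val hjk
    · intro j k hjk
      rw [hξw j, hξw k]
      exact hwanti k.val (by omega) j.val hjk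
    · intro j k
      rw [hzeq j, hξw k]
      rcases le_or_gt j.val k.val with h | h
      · rcases Nat.lt_or_ge j.val k.val with h' | h'
        · exact lt_trans (hzmono k.val (by omega) j.val h')
            (ZXIAux.zd_lt_wd l α' hbd' k.val)
        · have : j.val = k.val := by omega
          rw [this]
          exact ZXIAux.zd_lt_wd l α' hbd' k.val
      · exact lt_trans (ZXIAux.zd_lt_wd l α' hbd' j.val)
          (hwanti j.val (by omega) k.val h)
end

section
/- Let κ be infinite with partition κ = ⋃_{n<ω} X_n, |X_n| = κ, and λ = κ⁺. There exists a sequence ⟨f_α : α < λ⟩ of functions f_α : κ → On such that (1) f_α(i) ∈ A^{n(i)}_{α+1} \ A^{n(i)}_α for all i, and (2) for all n, l < ω, every strictly increasing sequence α_0 < ... < α_l < λ, and every sequence ζ_0, ..., ζ_l with ζ_k ∈ A^n_{α_k+1} \ A^n_{α_k}, there are κ-many i ∈ X_n such that f_{α_k}(i) = ζ_k for all k ≤ l. -/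
noncomputable section GenericAux

universe v

theorem ofDigits_lt {lam : Ordinal} (hl : 0 < lam) :
    ∀ d : List Ordinal, (∀ x ∈ d, x < lam) → ofDigits lam d < lam ^ d.length := by
  intro d
  induction d with
  | nil => intro _; simp [ofDigits]
  | cons a rest ih =>
    intro h
    have ha : a < lam := h a List.mem_cons_self
    have hr : ofDigits lam rest < lam ^ rest.length := ih fun x hx => h x (List.mem_cons_of_mem _ hx)
    have h1 : ofDigits lam (a :: rest) < lam ^ rest.length * (a + 1) := by
      rw [mul_add, mul_one]
      exact add_lt_add_right hr _
    have h2 : lam ^ rest.length * (a + 1) ≤ lam ^ rest.length * lam := by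
      apply mul_le_mul_right
      exact Order.add_one_le_of_lt ha
    calc ofDigits lam (a :: rest) < lam ^ rest.length * (a + 1) := h1
      _ ≤ lam ^ rest.length * lam := h2
      _ = lam ^ (a :: rest).length := by rw [List.length_cons, pow_succ]

theorem ofDigits_injOn {lam : Ordinal} (hl : 0 < lam) :
    ∀ d d' : List Ordinal, d.length = d'.length → (∀ x ∈ d, x < lam) → (∀ x ∈ d', x < lam) →
      ofDigits lam d = ofDigits lam d' → d = d' := by
  intro d
  induction d with
  | nil => intro d' hlen _ _ _; exact (List.length_eq_zero_iff.mp hlen.symm).symm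
  | cons a rest ih =>
    intro d' hlen hd hd' heq
    match d' with
    | [] => simp at hlen
    | b :: rest' =>
      have hlen' : rest.length = rest'.length := by simpa using hlen
      have hr : ofDigits lam rest < lam ^ rest.length :=
        ofDigits_lt hl rest fun x hx => hd x (List.mem_cons_of_mem _ hx)
      have hr' : ofDigits lam rest' < lam ^ rest.length := by
        rw [hlen']
        exact ofDigits_lt hl rest' fun x hx => hd' x (List.mem_cons_of_mem _ hx)
      have hab : a = b := by
        by_contra hne
        rcases lt_or_gt_of_ne hne with hlt | hlt
        · have : ofDigits lam (a :: rest) < ofDigits lam (b :: rest') := by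
            calc ofDigits lam (a :: rest) < lam ^ rest.length * (a + 1) := by
                  rw [mul_add, mul_one]; exact add_lt_add_right hr _
              _ ≤ lam ^ rest.length * b := by
                  apply mul_le_mul_right; exact Order.add_one_le_of_lt hlt
              _ ≤ ofDigits lam (b :: rest') := by
                  show _ ≤ lam ^ rest'.length * b + _
                  rw [← hlen']; exact le_self_add
          exact absurd heq this.ne
        · have : ofDigits lam (b :: rest') < ofDigits lam (a :: rest) := by
            calc ofDigits lam (b :: rest') < lam ^ rest'.length * (b + 1) := by
                  rw [mul_add, mul_one]
                  exact add_lt_add_right (by rw [← hlen']; exact hr') _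
              _ ≤ lam ^ rest'.length * a := by
                  apply mul_le_mul_right; exact Order.add_one_le_of_lt hlt
              _ ≤ ofDigits lam (a :: rest) := by
                  show _ ≤ lam ^ rest.length * a + _
                  rw [hlen']; exact le_self_add
          exact absurd heq this.ne'
      subst hab
      have heq2 : ofDigits lam rest = ofDigits lam rest' := by
        have : lam ^ rest.length * a + ofDigits lam rest
            = lam ^ rest.length * a + ofDigits lam rest' := by
          simpa [ofDigits, hlen'] using heq
        exact add_left_cancel this
      rw [ih rest' hlen' (fun x hx => hd x (List.mem_cons_of_mem _ hx))
        (fun x hx => hd' x (List.mem_cons_of_mem _ hx)) heq2]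

theorem mem_Aset_of {lam : Ordinal} {n : ℕ} {α : Ordinal} (d : List Ordinal)
    (hlen : d.length = n + 1) (hlt : ∀ x ∈ d, x < α) : ofDigits lam d ∈ Aset lam n α :=
  ⟨d, hlen, hlt, rfl⟩

theorem not_mem_Aset {lam : Ordinal} (hpos : 0 < lam) {n : ℕ} {α : Ordinal} (hα : α ≤ lam)
    (d : List Ordinal) (hlen : d.length = n + 1) (hdlt : ∀ x ∈ d, x < lam)
    (hx : ¬ ∀ x ∈ d, x < α) : ofDigits lam d ∉ Aset lam n α := by
  rintro ⟨d', hlen', hlt', heq⟩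
  have hd'lt : ∀ x ∈ d', x < lam := fun x hx' => lt_of_lt_of_le (hlt' x hx') hα
  have : d = d' := ofDigits_injOn hpos d d' (hlen.trans hlen'.symm) hdlt hd'lt heq
  subst this
  exact hx hlt'

/-- Engelking–Karłowicz style index type. -/
abbrev EKT (κ : Type v) (n : ℕ) : Type v :=
  Σ m : ℕ, (Fin m → κ) × ((Fin m → Bool) → (Fin (n + 1) → κ))

/-- evaluation of an EK condition at an ordinal -/
def ekEv {κ : Type v} (u : Ordinal → κ → Bool) {n : ℕ} (t : EKT κ n) (α : Ordinal) :
    Fin (n + 1) → κ := fun j => t.2.2 (fun p => u α (t.2.1 p)) j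

/-- the digit list extracted from a tuple of elements of `κ` via `sur` -/
def digList {κ : Type v} (sur : Ordinal → κ → Ordinal) (n : ℕ) (α : Ordinal)
    (v : Fin (n + 1) → κ) : List Ordinal := List.ofFn (fun j => sur α (v j))

open scoped Classical in
/-- the value of the generic function, an element of `A^n_{α+1} \ A^n_α` -/
def valD {κ : Type v} (lam : Ordinal) (sur : Ordinal → κ → Ordinal) (n : ℕ) (α : Ordinal)
    (v : Fin (n + 1) → κ) : Ordinal :=
  if ofDigits lam (digList sur n α v) ∈ Aset lam n α then
    ofDigits lam (α :: List.replicate n 0)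
  else ofDigits lam (digList sur n α v)

theorem valD_mem {κ : Type v} {lam : Ordinal} (hpos : 0 < lam) (sur : Ordinal → κ → Ordinal)
    (n : ℕ) {α : Ordinal} (hα : α < lam) (hsur1 : ∀ x, sur α x ≤ α) (v : Fin (n + 1) → κ) :
    valD lam sur n α v ∈ Aset lam n (α + 1) \ Aset lam n α := by
  have hlen : (digList sur n α v).length = n + 1 := by simp [digList]
  have hmem : ∀ x ∈ digList sur n α v, x ≤ α := by
    intro x hx
    rw [digList, List.mem_ofFn] at hx
    obtain ⟨j, rfl⟩ := hx
    exact hsur1 (v j)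
  simp only [valD]
  split_ifs with h
  · constructor
    · apply mem_Aset_of
      · simp
      · intro x hx
        rcases List.mem_cons.mp hx with rfl | hx'
        · exact lt_add_one _
        · rw [List.eq_of_mem_replicate hx']
          exact lt_of_le_of_lt (zero_le (a := α)) (lt_add_one α)
    · apply not_mem_Aset hpos hα.le
      · simp
      · intro x hx
        rcases List.mem_cons.mp hx with rfl | hx'
        · exact hα
        · rw [List.eq_of_mem_replicate hx']; exact hpos
      · intro hall
        exact absurd (hall α List.mem_cons_self) (lt_irrefl α)
  · constructor
    · apply mem_Aset_of _ hlen
      intro x hx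
      exact Order.lt_add_one_iff.mpr (hmem x hx)
    · exact h

open Cardinal in
theorem exists_sur_aux (κ : Type v) [Infinite κ] {α : Ordinal.{v}}
    (hα : α < (Order.succ (Cardinal.mk κ)).ord) :
    ∃ s : κ → Ordinal.{v}, (∀ x, s x ≤ α) ∧ (∀ β ≤ α, ∃ x, s x = β) := by
  have hcard : α.card ≤ #κ := Order.lt_succ_iff.mp (Cardinal.lt_ord.mp hα)
  have h1 : #(Set.Iio (α + 1) : Set Ordinal) ≤ Cardinal.lift.{v+1} #κ := by
    rw [Ordinal.mk_Iio_ordinal]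
    apply Cardinal.lift_le.mpr
    rw [Ordinal.add_one_eq_succ, Ordinal.card_succ]
    calc α.card + 1 ≤ #κ + 1 := add_le_add_left hcard 1
      _ = #κ := Cardinal.add_one_eq (Cardinal.infinite_iff.mp ‹Infinite κ›)
  have h2 : #(Set.Iio (α + 1) : Set Ordinal) ≤ #(ULift.{v+1} κ) := by
    rwa [Cardinal.mk_uLift]
  obtain ⟨e⟩ := (Cardinal.le_def _ _).mp h2
  have hne : Nonempty (Set.Iio (α + 1) : Set Ordinal) := ⟨⟨α, lt_add_one α⟩⟩
  have hsur : Function.Surjective (Function.invFun e) :=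
    Function.invFun_surjective e.injective
  refine ⟨fun x => ((Function.invFun e (ULift.up x) : (Set.Iio (α+1) : Set Ordinal)) : Ordinal),
    ?_, ?_⟩
  · intro x
    exact Order.le_of_lt_add_one (Function.invFun e (ULift.up x)).2
  · intro β hβ
    obtain ⟨y, hy⟩ := hsur ⟨β, Order.lt_add_one_iff.mpr hβ⟩
    exact ⟨y.down, by change (↑(Function.invFun (⇑e) y) : Ordinal) = β; rw [hy]⟩

open Cardinal in
theorem exists_u_aux (κ : Type v) [Infinite κ] :
    ∃ u : Ordinal.{v} → κ → Bool,
      ∀ α β, α < (Order.succ (Cardinal.mk κ)).ord → β < (Order.succ (Cardinal.mk κ)).ord →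
        u α = u β → α = β := by
  set lam := (Order.succ (Cardinal.mk κ)).ord with hlam
  have hb : #(κ → Bool) = 2 ^ #κ := by
    rw [Cardinal.mk_arrow, Cardinal.mk_bool, Cardinal.lift_id', Cardinal.lift_two]
  have h1 : Cardinal.lift.{v} #(Set.Iio lam : Set Ordinal) ≤
      Cardinal.lift.{v+1} #(κ → Bool) := by
    rw [Ordinal.mk_Iio_ordinal, Cardinal.card_ord, Cardinal.lift_lift, hb]
    exact Cardinal.lift_le.mpr (Order.succ_le_of_lt (Cardinal.cantor _))
  obtain ⟨e⟩ := Cardinal.lift_mk_le'.mp h1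
  refine ⟨fun α => if h : α < lam then e ⟨α, h⟩ else fun _ => false, ?_⟩
  intro α β hα hβ heq
  simp only [dif_pos hα, dif_pos hβ] at heq
  exact congrArg Subtype.val (e.injective heq)

open Cardinal in
theorem mk_arrow_le_aux (κ : Type v) [Infinite κ] (A : Type) [Fintype A] (B : Type v)
    (hB : #B ≤ #κ) : #(A → B) ≤ #κ := by
  have h1 : #(A → B) = Cardinal.lift.{0} #B ^ Cardinal.lift.{v} #A := Cardinal.mk_arrow A B
  rw [h1, Cardinal.lift_uzero, Cardinal.mk_fintype A, Cardinal.lift_natCast,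
    Cardinal.power_natCast]
  calc #B ^ Fintype.card A ≤ #κ ^ Fintype.card A := pow_le_pow_left' hB _
    _ ≤ #κ := Cardinal.power_nat_le (Cardinal.infinite_iff.mp ‹Infinite κ›)

open Cardinal in
theorem mk_EKT_aux (κ : Type v) [Infinite κ] (n : ℕ) : #(EKT κ n) = #κ := by
  have hκ : ℵ₀ ≤ #κ := Cardinal.infinite_iff.mp ‹Infinite κ›
  apply le_antisymm
  · rw [EKT, Cardinal.mk_sigma]
    calc (Cardinal.sum fun m : ℕ => #((Fin m → κ) × ((Fin m → Bool) → (Fin (n + 1) → κ))))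
        ≤ Cardinal.sum (fun _ : ℕ => #κ) := by
          apply Cardinal.sum_le_sum
          intro m
          rw [Cardinal.mk_prod, Cardinal.lift_id, Cardinal.lift_id]
          have h1 : #(Fin m → κ) ≤ #κ := mk_arrow_le_aux κ (Fin m) κ le_rfl
          have h2 : #((Fin m → Bool) → (Fin (n + 1) → κ)) ≤ #κ :=
            mk_arrow_le_aux κ (Fin m → Bool) (Fin (n + 1) → κ)
              (mk_arrow_le_aux κ (Fin (n+1)) κ le_rfl)
          calc #(Fin m → κ) * #((Fin m → Bool) → (Fin (n + 1) → κ)) ≤ #κ * #κ :=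
                mul_le_mul' h1 h2
            _ = #κ := Cardinal.mul_eq_self hκ
      _ = Cardinal.lift.{v} #ℕ * Cardinal.lift.{0} #κ := Cardinal.sum_const _ _
      _ = ℵ₀ * #κ := by simp
      _ = #κ := Cardinal.aleph0_mul_eq hκ
  · have : Function.Injective (fun x : κ =>
        (⟨0, Fin.elim0, fun _ _ => x⟩ : EKT κ n)) := by
      intro x y h
      have h2 := congrArg (fun t : EKT κ n => t.2.2 (fun _ => false) ⟨0, Nat.succ_pos n⟩) h
      simpa using h2
    exact Cardinal.mk_le_of_injective this

open Cardinal in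
theorem exists_pi_aux (κ : Type v) [Infinite κ] (n : ℕ) (Y : Type v) (hY : #Y = #κ) :
    ∃ π : Y → EKT κ n, ∀ t, #{y : Y // π y = t} = #κ := by
  have hκ : ℵ₀ ≤ #κ := Cardinal.infinite_iff.mp ‹Infinite κ›
  have h1 : #(EKT κ n × κ) = #κ := by
    rw [Cardinal.mk_prod, Cardinal.lift_id, Cardinal.lift_id, mk_EKT_aux,
      Cardinal.mul_eq_self hκ]
  have h2 : #Y = #(EKT κ n × κ) := by rw [hY, h1]
  obtain ⟨g⟩ := Cardinal.eq.mp h2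
  refine ⟨fun y => (g y).1, fun t => ?_⟩
  have e1 : {y : Y // (g y).1 = t} ≃ {p : EKT κ n × κ // p.1 = t} :=
    Equiv.subtypeEquiv g fun y => Iff.rfl
  have e2 : {p : EKT κ n × κ // p.1 = t} ≃ κ :=
    { toFun := fun p => p.1.2
      invFun := fun x => ⟨(t, x), rfl⟩
      left_inv := by rintro ⟨⟨t', x⟩, h⟩; subst h; rfl
      right_inv := fun x => rfl }
  rw [Cardinal.mk_congr (e1.trans e2)]

end GenericAux

/-- The generic sequence ⟨f_α : α < κ⁺⟩: f_α(i) ∈ A^{n(i)}_{α+1} \ A^{n(i)}_α, and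
every finite admissible pattern of values is realized κ-many times on each X_n. -/
theorem generic_sequence_exists (κ : Type u) [Infinite κ]
    (X : ℕ → Set κ) (hpart : ∀ i, ∃! n, i ∈ X n)
    (hcard : ∀ n, Cardinal.mk (X n) = Cardinal.mk κ)
    (nfun : κ → ℕ) (hnfun : ∀ i, i ∈ X (nfun i)) :
    ∃ f : Ordinal → κ → Ordinal,
      (∀ α < (Order.succ (Cardinal.mk κ)).ord, ∀ i,
        f α i ∈ Aset (Order.succ (Cardinal.mk κ)).ord (nfun i) (α + 1) \
          Aset (Order.succ (Cardinal.mk κ)).ord (nfun i) α) ∧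
      (∀ (n l : ℕ) (αs : Fin (l + 1) → Ordinal), StrictMono αs →
        (∀ k, αs k < (Order.succ (Cardinal.mk κ)).ord) →
        ∀ ζs : Fin (l + 1) → Ordinal,
        (∀ k, ζs k ∈ Aset (Order.succ (Cardinal.mk κ)).ord n (αs k + 1) \
          Aset (Order.succ (Cardinal.mk κ)).ord n (αs k)) →
        Cardinal.mk {i : κ // i ∈ X n ∧ ∀ k, f (αs k) i = ζs k} = Cardinal.mk κ) := by
  classical
  set lam := (Order.succ (Cardinal.mk κ)).ord with hlamdef
  have hκ : Cardinal.aleph0 ≤ Cardinal.mk κ := Cardinal.infinite_iff.mp ‹Infinite κ›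
  have hpos : (0 : Ordinal) < lam := by
    rw [hlamdef, Cardinal.lt_ord, Ordinal.card_zero]
    exact lt_of_lt_of_le (by simpa using Cardinal.mk_ne_zero κ |>.bot_lt) (Order.le_succ _)
  obtain ⟨u, hu⟩ := exists_u_aux κ
  have hsurex : ∀ α : Ordinal, α < lam → ∃ s : κ → Ordinal,
      (∀ x, s x ≤ α) ∧ (∀ β ≤ α, ∃ x, s x = β) := fun α h => exists_sur_aux κ h
  choose! sur hsur1 hsur2 using hsurex
  choose π hπ using fun n : ℕ => exists_pi_aux κ n (X n) (hcard n)
  refine ⟨fun α i => if α < lam then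
      valD lam sur (nfun i) α (ekEv u (π (nfun i) ⟨i, hnfun i⟩) α) else 0, ?_, ?_⟩
  · intro α hα i
    simp only [if_pos hα]
    exact valD_mem hpos sur (nfun i) hα (hsur1 α hα) _
  · intro n l αs hmono hlt' ζs hζ
    -- extract digit lists for the targets
    have hex : ∀ k, ∃ d : List Ordinal, d.length = n + 1 ∧ (∀ x ∈ d, x < αs k + 1) ∧
        ζs k = ofDigits lam d := fun k => (hζ k).1
    choose d hdlen hdlt hdval using hex
    -- choose preimages under sur
    have hvex : ∀ (k : Fin (l + 1)) (j : Fin (n + 1)), ∃ x : κ,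
        sur (αs k) x = (d k).get (Fin.cast (hdlen k).symm j) := by
      intro k j
      apply hsur2 (αs k) (hlt' k)
      exact Order.le_of_lt_add_one (hdlt k _ (List.get_mem _ _))
    choose v hv using hvex
    have hdig : ∀ k, digList sur n (αs k) (v k) = d k := by
      intro k
      apply List.ext_getElem (by simp [digList, hdlen k])
      intro i h1 h2
      simp only [digList, List.getElem_ofFn]
      have := hv k ⟨i, by simpa [digList] using h1⟩
      simpa [List.get_eq_getElem] using this
    -- EK condition realizing the pattern
    have hudist : ∀ k k' : Fin (l + 1), k ≠ k' → u (αs k) ≠ u (αs k') := by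
      intro k k' hkk' he
      exact hkk' (hmono.injective (hu _ _ (hlt' k) (hlt' k') he))
    have hsep : ∀ k k' : Fin (l + 1), k ≠ k' → ∃ x : κ, u (αs k) x ≠ u (αs k') x := by
      intro k k' h
      by_contra hc
      push_neg at hc
      exact hudist k k' h (funext hc)
    set m := (l + 1) * (l + 1) with hm
    let q : Fin (l + 1) × Fin (l + 1) ≃ Fin m := finProdFinEquiv
    let cc : Fin m → κ := fun p =>
      if h : (q.symm p).1 ≠ (q.symm p).2 then Classical.choose (hsep _ _ h)
      else Classical.arbitrary κ
    let pat : Fin (l + 1) → (Fin m → Bool) := fun k p => u (αs k) (cc p)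
    have hpatinj : Function.Injective pat := by
      intro k k' he
      by_contra hkk'
      have hcc : cc (q (k, k')) = Classical.choose (hsep k k' hkk') := by
        have h1 : q.symm (q (k, k')) = (k, k') := Equiv.symm_apply_apply _ _
        simp only [cc, h1]
        exact dif_pos hkk'
      have hp := congrFun he (q (k, k'))
      simp only [pat, hcc] at hp
      exact Classical.choose_spec (hsep k k' hkk') hp
    let φ : (Fin m → Bool) → (Fin (n + 1) → κ) := fun b =>
      if h : ∃ k, pat k = b then v (Classical.choose h) else fun _ => Classical.arbitrary κ
    let t : EKT κ n := ⟨m, cc, φ⟩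
    have hev : ∀ k, ekEv u t (αs k) = v k := by
      intro k
      have hbx : (fun p => u (αs k) (t.2.1 p)) = pat k := rfl
      show (fun j => t.2.2 (fun p => u (αs k) (t.2.1 p)) j) = v k
      rw [hbx]
      have hex2 : ∃ k', pat k' = pat k := ⟨k, rfl⟩
      show φ (pat k) = v k
      simp only [φ, dif_pos hex2]
      exact congrArg v (hpatinj (Classical.choose_spec hex2))
    -- values on the fiber over t
    have key : ∀ i : κ, ∀ hi : i ∈ X n, π n ⟨i, hi⟩ = t → ∀ k,
        (if αs k < lam then
          valD lam sur (nfun i) (αs k) (ekEv u (π (nfun i) ⟨i, hnfun i⟩) (αs k))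
        else 0) = ζs k := by
      intro i hi hy k
      rw [if_pos (hlt' k)]
      have hn : nfun i = n := (hpart i).unique (hnfun i) hi
      subst hn
      have hyy : (⟨i, hnfun i⟩ : (X (nfun i) : Set κ)) = ⟨i, hi⟩ := Subtype.ext rfl
      rw [hyy, hy, hev k]
      simp only [valD]
      rw [hdig k, ← hdval k, if_neg (hζ k).2]
    apply le_antisymm
    · exact Cardinal.mk_subtype_le _
    · rw [← hπ n t]
      apply Cardinal.mk_le_of_injective
        (f := fun y : {y : (X n : Set κ) // π n y = t} =>
          (⟨(↑↑y : κ), (↑y : (X n : Set κ)).2, by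
            intro k
            have := key (↑↑y : κ) (↑y : (X n : Set κ)).2 y.2 k
            simpa using this⟩ :
            {i : κ // i ∈ X n ∧ ∀ k, (if αs k < lam then
              valD lam sur (nfun i) (αs k) (ekEv u (π (nfun i) ⟨i, hnfun i⟩) (αs k))
            else 0) = ζs k}))
      intro y y' h
      have h2 := congrArg Subtype.val h
      dsimp at h2
      exact Subtype.ext (Subtype.ext h2)
end

section
/- With ⟨f_α : α < κ⁺⟩ as in the genericity construction (each f_α(i) ∈ A^{n(i)}_{α+1} \ A^{n(i)}_α and all finite patterns realized κ-often), define g_α(i) to be the least element of A^{n(i)}_{α+1} ∪ {λ^(n(i)+1)} strictly greater than f_α(i), i.e., the immediate successor of f_α(i) in A^{n(i)}_{α+1} when f_α(i) is non-maximal there, and λ^(n(i)+1) otherwise. Then for every finite increasing sequence α_0 < α_1 < ... < α_l < κ⁺ there exists i < κ such that f_{α_k}(i) < f_{α_{k+1}}(i) < g_{α_{k+1}}(i) < g_{α_k}(i) for all k < l. -/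
theorem ofDigits_cons (lam a : Ordinal) (d : List Ordinal) :
    ofDigits lam (a :: d) = lam ^ d.length * a + ofDigits lam d := rfl

theorem add_one_le_of_lt' {a b : Ordinal} (h : a < b) : a + 1 ≤ b := by
  rw [Ordinal.add_one_eq_succ]; exact Order.succ_le_of_lt h

theorem ofDigits_lt_pow {lam : Ordinal} :
    ∀ d : List Ordinal, (∀ x ∈ d, x < lam) → ofDigits lam d < lam ^ d.length := by
  intro d
  induction d with
  | nil => intro _; simp [ofDigits]
  | cons a rest ih =>
    intro h
    have h1 := ih (fun x hx => h x (List.mem_cons_of_mem _ hx))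
    have ha : a + 1 ≤ lam := add_one_le_of_lt' (h a List.mem_cons_self)
    rw [ofDigits_cons, List.length_cons, pow_succ]
    calc lam ^ rest.length * a + ofDigits lam rest
        < lam ^ rest.length * a + lam ^ rest.length := (add_lt_add_iff_left _).mpr h1
      _ = lam ^ rest.length * (a + 1) := by rw [mul_add_one]
      _ ≤ lam ^ rest.length * lam := mul_le_mul_right ha _

theorem ofFn_le {lam : Ordinal} : ∀ {m : ℕ} (u v : Fin m → Ordinal), (∀ j, u j ≤ v j) →
    ofDigits lam (List.ofFn u) ≤ ofDigits lam (List.ofFn v) := by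
  intro m
  induction m with
  | zero => intro u v _; simp
  | succ m ih =>
    intro u v h
    rw [List.ofFn_succ, List.ofFn_succ, ofDigits_cons, ofDigits_cons]
    simp only [List.length_ofFn]
    exact add_le_add (mul_le_mul_right (h 0) _) (ih _ _ fun j => h j.succ)

theorem ofFn_lt {lam : Ordinal} : ∀ {m : ℕ} (u v : Fin m → Ordinal),
    (∀ j, u j < lam) → ∀ j₀ : Fin m, (∀ j, j < j₀ → u j = v j) → u j₀ < v j₀ →
    ofDigits lam (List.ofFn u) < ofDigits lam (List.ofFn v) := by
  intro m
  induction m with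
  | zero => intro u v _ j₀; exact j₀.elim0
  | succ m ih =>
    intro u v hu j₀ heq hlt
    rw [List.ofFn_succ, List.ofFn_succ, ofDigits_cons, ofDigits_cons]
    simp only [List.length_ofFn]
    rcases Fin.eq_zero_or_eq_succ j₀ with rfl | ⟨i, rfl⟩
    · have htail : ofDigits lam (List.ofFn (fun i : Fin m => u i.succ)) < lam ^ m := by
        have := ofDigits_lt_pow (lam := lam) (List.ofFn (fun i : Fin m => u i.succ))
          (by simp only [List.mem_ofFn]; rintro x ⟨j, rfl⟩; exact hu j.succ)
        simpa using this
      calc lam ^ m * u 0 + ofDigits lam (List.ofFn fun i : Fin m => u i.succ)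
          < lam ^ m * u 0 + lam ^ m := (add_lt_add_iff_left _).mpr htail
        _ = lam ^ m * (u 0 + 1) := by rw [mul_add_one]
        _ ≤ lam ^ m * v 0 := mul_le_mul_right (add_one_le_of_lt' hlt) _
        _ ≤ lam ^ m * v 0 + ofDigits lam (List.ofFn fun i : Fin m => v i.succ) :=
            le_self_add
    · have h0 : u 0 = v 0 := heq 0 (Fin.succ_pos i)
      rw [h0]
      refine add_lt_add_right (ih _ _ (fun j => hu j.succ) i (fun j hj => heq j.succ ?_) hlt) _
      exact Fin.succ_lt_succ_iff.mpr hj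

theorem exists_min_diff {m : ℕ} (u v : Fin m → Ordinal) (h : ∃ j, u j ≠ v j) :
    ∃ j₀, u j₀ ≠ v j₀ ∧ ∀ j, j < j₀ → u j = v j := by
  classical
  obtain ⟨j, hj⟩ := h
  have hP : ∃ n : ℕ, ∃ h : n < m, u ⟨n, h⟩ ≠ v ⟨n, h⟩ := ⟨j, j.isLt, by simpa using hj⟩
  obtain ⟨hn, hne⟩ := Nat.find_spec hP
  refine ⟨⟨Nat.find hP, hn⟩, hne, ?_⟩
  intro j hjlt
  by_contra hne'
  exact Nat.find_min hP hjlt ⟨j.isLt, by simpa using hne'⟩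

theorem ofFn_ne {lam : Ordinal} {m : ℕ} (u v : Fin m → Ordinal) (hu : ∀ j, u j < lam)
    (hv : ∀ j, v j < lam) (hne : ∃ j, u j ≠ v j) :
    ofDigits lam (List.ofFn u) ≠ ofDigits lam (List.ofFn v) := by
  obtain ⟨j₀, hj, hmin⟩ := exists_min_diff u v hne
  rcases lt_or_gt_of_ne hj with h | h
  · exact ne_of_lt (ofFn_lt u v hu j₀ hmin h)
  · exact ne_of_gt (ofFn_lt v u hv j₀ (fun j hj' => (hmin j hj').symm) h)

theorem ofFn_get_cast {m : ℕ} (d : List Ordinal) (h : d.length = m) :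
    List.ofFn (fun j : Fin m => d.get (Fin.cast h.symm j)) = d := by
  apply List.ext_getElem <;> simp [h]

/-- With f as in the genericity construction and g_α(i) the immediate successor of
f_α(i) in A^{n(i)}_{α+1} ∪ {λ^(n(i)+1)}, every finite increasing sequence of indices
admits a point i where the f-values increase and the g-values decrease, interleaved. -/
theorem interleaving_claim (κ : Type u) [Infinite κ]
    (X : ℕ → Set κ) (hpart : ∀ i, ∃! n, i ∈ X n)
    (hcard : ∀ n, Cardinal.mk (X n) = Cardinal.mk κ)
    (nfun : κ → ℕ) (hnfun : ∀ i, i ∈ X (nfun i))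
    (f g : Ordinal → κ → Ordinal)
    (hf1 : ∀ α < (Order.succ (Cardinal.mk κ)).ord, ∀ i,
      f α i ∈ Aset (Order.succ (Cardinal.mk κ)).ord (nfun i) (α + 1) \
        Aset (Order.succ (Cardinal.mk κ)).ord (nfun i) α)
    (hf2 : ∀ (n l : ℕ) (αs : Fin (l + 1) → Ordinal), StrictMono αs →
      (∀ k, αs k < (Order.succ (Cardinal.mk κ)).ord) →
      ∀ ζs : Fin (l + 1) → Ordinal,
      (∀ k, ζs k ∈ Aset (Order.succ (Cardinal.mk κ)).ord n (αs k + 1) \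
        Aset (Order.succ (Cardinal.mk κ)).ord n (αs k)) →
      Cardinal.mk {i : κ // i ∈ X n ∧ ∀ k, f (αs k) i = ζs k} = Cardinal.mk κ)
    (hgdef : ∀ α i, g α i = sInf
      ((Aset (Order.succ (Cardinal.mk κ)).ord (nfun i) (α + 1) ∪
          {(Order.succ (Cardinal.mk κ)).ord ^ (nfun i + 1 : ℕ)}) ∩
        Set.Ioi (f α i))) :
    ∀ (l : ℕ) (αs : Fin (l + 1) → Ordinal), StrictMono αs →
      (∀ k, αs k < (Order.succ (Cardinal.mk κ)).ord) →
      ∃ i : κ, ∀ k : Fin l,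
        f (αs k.castSucc) i < f (αs k.succ) i ∧
        f (αs k.succ) i < g (αs k.succ) i ∧
        g (αs k.succ) i < g (αs k.castSucc) i := by
  classical
  intro l αs hmono hltlam
  set lam := (Order.succ (Cardinal.mk κ)).ord with hlamdef
  have hℵ : Cardinal.aleph0 ≤ Order.succ (Cardinal.mk κ) :=
    le_trans (Cardinal.infinite_iff.mp inferInstance) (Order.le_succ _)
  have hlim : Order.IsSuccLimit lam := Cardinal.isSuccLimit_ord hℵ
  have hlt1 : ∀ a : Ordinal, a < a + 1 := fun a => by
    rw [Ordinal.add_one_eq_succ]; exact Order.lt_succ a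
  have hα1lt : ∀ m : Fin (l + 1), αs m + 1 < lam := fun m => by
    have := hlim.succ_lt (hltlam m); rwa [← Ordinal.add_one_eq_succ] at this
  -- the f-values
  set D : Fin (l + 1) → Fin (l + 1) → Ordinal := fun m j => αs (min j m) with hD
  set ζ : Fin (l + 1) → Ordinal := fun m => ofDigits lam (List.ofFn (D m)) with hζ
  have hDle : ∀ m j, D m j ≤ αs m := fun m j => hmono.monotone (min_le_right _ _)
  have hDlt : ∀ m j, D m j < lam := fun m j => lt_of_le_of_lt (hDle m j) (hltlam m)
  have hζlt : ∀ m, ζ m < lam ^ (l + 1) := by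
    intro m
    have := ofDigits_lt_pow (lam := lam) (List.ofFn (D m))
      (by simp only [List.mem_ofFn]; rintro x ⟨j, rfl⟩; exact hDlt m j)
    simpa only [List.length_ofFn] using this
  have hζmem : ∀ m, ζ m ∈ Aset lam l (αs m + 1) \ Aset lam l (αs m) := by
    intro m
    constructor
    · refine ⟨List.ofFn (D m), by simp, ?_, rfl⟩
      simp only [List.mem_ofFn]
      rintro x ⟨j, rfl⟩
      exact lt_of_le_of_lt (hDle m j) (hlt1 _)
    · rintro ⟨d, hlen, hdig, heq⟩
      have hd := ofFn_get_cast d hlen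
      have hvmem : ∀ j : Fin (l + 1), d.get (Fin.cast hlen.symm j) ∈ d := fun j =>
        List.get_mem d (Fin.cast hlen.symm j)
      refine ofFn_ne (lam := lam) (fun j : Fin (l + 1) => d.get (Fin.cast hlen.symm j)) (D m)
        (fun j => lt_trans (hdig _ (hvmem j)) (hltlam m)) (fun j => hDlt m j)
        ⟨Fin.last l, ?_⟩ ?_
      · have h1 : d.get (Fin.cast hlen.symm (Fin.last l)) < αs m := hdig _ (hvmem _)
        have h2 : D m (Fin.last l) = αs m := by
          rw [hD]; simp only []
          rw [min_eq_right (Fin.le_last m)]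
        rw [h2]; exact ne_of_lt h1
      · rw [hd]; exact heq.symm
  -- get the witness i
  have hcard' := hf2 l l αs hmono hltlam ζ hζmem
  have hne : Nonempty {i : κ // i ∈ X l ∧ ∀ k, f (αs k) i = ζ k} := by
    rw [← Cardinal.mk_ne_zero_iff, hcard']
    exact Cardinal.mk_ne_zero κ
  obtain ⟨⟨i, hiX, hif⟩⟩ := hne
  have hni : nfun i = l := (hpart i).unique (hnfun i) hiX
  -- the competitor values μ
  set E : Fin l → Fin (l + 1) → Ordinal := fun k j =>
    if j < k.castSucc then αs j else if j = k.castSucc then αs k.castSucc + 1 else 0 with hE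
  set μ : Fin l → Ordinal := fun k => ofDigits lam (List.ofFn (E k)) with hμ
  have hElt : ∀ k j, E k j < lam := by
    intro k j
    rw [hE]; simp only []
    split
    · exact hltlam j
    · split
      · exact hα1lt _
      · exact hlim.pos
  have hμlt : ∀ k, μ k < lam ^ (l + 1) := by
    intro k
    have := ofDigits_lt_pow (lam := lam) (List.ofFn (E k))
      (by simp only [List.mem_ofFn]; rintro x ⟨j, rfl⟩; exact hElt k j)
    simpa only [List.length_ofFn] using this
  have hμmem : ∀ k : Fin l, μ k ∈ Aset lam l (αs k.succ + 1) := by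
    intro k
    refine ⟨List.ofFn (E k), by simp, ?_, rfl⟩
    simp only [List.mem_ofFn]
    rintro x ⟨j, rfl⟩
    rw [hE]; simp only []
    split
    · exact lt_trans (hmono (lt_trans (by assumption) k.castSucc_lt_succ))
        (hlt1 _)
    · split
      · have : αs k.castSucc + 1 ≤ αs k.succ :=
          add_one_le_of_lt' (hmono k.castSucc_lt_succ)
        exact lt_of_le_of_lt this (hlt1 _)
      · exact lt_of_le_of_lt zero_le (hlt1 _)
  -- ζ is increasing along k
  have hζinc : ∀ k : Fin l, ζ k.castSucc < ζ k.succ := by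
    intro k
    refine ofFn_lt (D k.castSucc) (D k.succ) (fun j => hDlt _ j) k.succ ?_ ?_
    · intro j hj
      have hj' : j ≤ k.castSucc := by
        rw [Fin.le_def]; rw [Fin.lt_def] at hj
        simp only [Fin.val_succ, Fin.coe_castSucc] at *
        omega
      rw [hD]; simp only []
      rw [min_eq_left hj', min_eq_left (le_of_lt hj)]
    · rw [hD]; simp only []
      rw [min_eq_right (le_of_lt k.castSucc_lt_succ), min_self]
      exact hmono k.castSucc_lt_succ
  -- ζ (k+1) < μ k
  have hζμ : ∀ k : Fin l, ζ k.succ < μ k := by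
    intro k
    refine ofFn_lt (D k.succ) (E k) (fun j => hDlt _ j) k.castSucc ?_ ?_
    · intro j hj
      rw [hD, hE]; simp only []
      rw [if_pos hj, min_eq_left (le_of_lt (lt_trans hj k.castSucc_lt_succ))]
    · show αs (min k.castSucc k.succ) < E k k.castSucc
      have hEval : E k k.castSucc = αs k.castSucc + 1 := by simp [hE]
      rw [hEval, min_eq_left (le_of_lt k.castSucc_lt_succ)]
      exact hlt1 _
  -- anything in A_{α_k+1} above ζ k exceeds μ k
  have hF : ∀ (k : Fin l) (ξ : Ordinal), ξ ∈ Aset lam l (αs k.castSucc + 1) →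
      ζ k.castSucc < ξ → μ k < ξ := by
    rintro k ξ ⟨d, hlen, hdig, rfl⟩ hgt
    set v : Fin (l + 1) → Ordinal := fun j => d.get (Fin.cast hlen.symm j) with hv
    have hd := ofFn_get_cast d hlen
    rw [← hd] at hgt ⊢
    have hvmem : ∀ j, v j ∈ d := fun j =>
      List.get_mem d (Fin.cast hlen.symm j)
    have hvle : ∀ j, v j ≤ αs k.castSucc := by
      intro j
      have h := hdig _ (hvmem j)
      rw [Ordinal.add_one_eq_succ, Order.lt_succ_iff] at h
      exact h
    by_cases hcase : ∀ j, j < k.castSucc → v j = αs j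
    · exfalso
      refine absurd hgt (not_lt.mpr (ofFn_le v (D k.castSucc) ?_))
      intro j
      rcases lt_or_ge j k.castSucc with hjk | hjk
      · rw [hcase j hjk, hD]; simp only []
        rw [min_eq_left (le_of_lt hjk)]
      · rw [hD]; simp only []
        rw [min_eq_right hjk]
        exact hvle j
    · push_neg at hcase
      obtain ⟨j₁, hj₁K, hj₁⟩ := hcase
      obtain ⟨j₀, hj₀ne, hj₀min⟩ := exists_min_diff v
        (fun j => if j < k.castSucc then αs j else v j)
        ⟨j₁, by simpa [hj₁K] using hj₁⟩
      have hj₀K : j₀ < k.castSucc := by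
        by_contra h
        exact hj₀ne (by simp [h])
      have hne' : v j₀ ≠ αs j₀ := by simpa [hj₀K] using hj₀ne
      have heqlt : ∀ j, j < j₀ → v j = αs j := by
        intro j hj
        have := hj₀min j hj
        simpa [lt_trans hj hj₀K] using this
      rcases lt_or_gt_of_ne hne' with h | h
      · exfalso
        refine absurd hgt (not_lt.mpr (le_of_lt (ofFn_lt v (D k.castSucc)
          (fun j => lt_of_le_of_lt (hvle j) (hltlam _)) j₀ ?_ ?_)))
        · intro j hj
          rw [heqlt j hj, hD]; simp only []
          rw [min_eq_left (le_of_lt (lt_trans hj hj₀K))]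
        · rw [hD]; simp only []
          rw [min_eq_left (le_of_lt hj₀K)]
          exact h
      · refine ofFn_lt (E k) v (fun j => hElt k j) j₀ ?_ ?_
        · intro j hj
          rw [hE]; simp only []
          rw [if_pos (lt_trans hj hj₀K)]
          exact (heqlt j hj).symm
        · rw [hE]; simp only []
          rw [if_pos hj₀K]
          exact h
  -- the sets S
  set S : Fin (l + 1) → Set Ordinal := fun m =>
    (Aset lam l (αs m + 1) ∪ {lam ^ (l + 1 : ℕ)}) ∩ Set.Ioi (ζ m) with hS
  have hg : ∀ m, g (αs m) i = sInf (S m) := by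
    intro m
    rw [hgdef, hni, hif]
  have hStop : ∀ m, (lam ^ (l + 1 : ℕ)) ∈ S m := fun m => ⟨Or.inr rfl, hζlt m⟩
  have hgS : ∀ m, g (αs m) i ∈ S m := by
    intro m
    rw [hg m]
    exact csInf_mem ⟨_, hStop m⟩
  refine ⟨i, fun k => ?_⟩
  have h3 : g (αs k.succ) i ≤ μ k := by
    rw [hg]
    exact csInf_le (OrderBot.bddBelow _) ⟨Or.inl (hμmem k), hζμ k⟩
  have h4 : μ k < g (αs k.castSucc) i := by
    rcases (hgS k.castSucc).1 with hA | htop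
    · exact hF k _ hA (hgS k.castSucc).2
    · rw [Set.mem_singleton_iff] at htop
      rw [htop]
      exact hμlt k
  refine ⟨?_, ?_, lt_of_le_of_lt h3 h4⟩
  · rw [hif, hif]; exact hζinc k
  · rw [hif]; exact (hgS k.succ).2
end
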